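/- Let A be an m × N real matrix with m < N. If every nonzero vector in the nullspace of A has more than 2k nonzero entries (equivalently 2k < Spark(A)), then for any k-sparse vectors c₁, c₂ with Ac₁ = Ac₂, we have c₁ = c₂. Conversely, if some nonzero nullspace vector has at most 2k nonzero entries, there exist distinct k-sparse vectors c₁ ≠ c₂ with Ac₁ = Ac₂. -/

import Mathlib

/-!
If `c₁ ≠ c₂` are `k`-sparse with `A c₁ = A c₂`, then `c₁ - c₂` is a nonzero kernel vector with at
most `2k` nonzero entries. Conversely, a nonzero kernel vector `η` with at most `2k` nonzero
entries splits as `η = c₁ - c₂` with `c₁` keeping at most `k` of its nonzero entries and `-c₂`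
the remaining ones.
-/

/-- ℓ0 "norm": number of nonzero entries. -/
noncomputable def l0 {N : ℕ} (η : Fin N → ℝ) : ℕ :=
  (Finset.univ.filter fun j => η j ≠ 0).card

open Finset

section Hamming

variable {ι β : Type*} [Fintype ι] [DecidableEq β]

theorem hammingNorm_sub_eq_hammingDist [AddGroup β] (x y : ι → β) :
    hammingNorm (x - y) = hammingDist x y := by
  simp_rw [hammingNorm, hammingDist, Pi.sub_apply, ne_eq, sub_eq_zero]

theorem hammingNorm_sub_le [AddGroup β] (x y : ι → β) :
    hammingNorm (x - y) ≤ hammingNorm x + hammingNorm y := by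
  rw [hammingNorm_sub_eq_hammingDist, ← hammingDist_zero_right x, ← hammingDist_zero_left]
  exact hammingDist_triangle x 0 y

theorem exists_sub_eq_of_hammingNorm_le_add [AddCommGroup β] {x : ι → β} {a b : ℕ}
    (hx : hammingNorm x ≤ a + b) :
    ∃ u v : ι → β, hammingNorm u ≤ a ∧ hammingNorm v ≤ b ∧ u - v = x := by
  classical
  set s : Finset ι := {i | x i ≠ 0}
  obtain ⟨t, hts, ht⟩ := exists_subset_card_eq (min_le_right a #s)
  refine ⟨t.piecewise x 0, t.piecewise x 0 - x, ?_, ?_, sub_sub_cancel _ _⟩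
  · calc hammingNorm (t.piecewise x 0) ≤ #t := by
          refine card_le_card fun i hi => ?_
          by_contra hit
          simp_all
      _ ≤ a := ht ▸ min_le_left a #s
  · calc hammingNorm (t.piecewise x 0 - x) ≤ #(s \ t) := by
          refine card_le_card fun i hi => ?_
          by_cases hit : i ∈ t <;> simp_all [s]
      _ ≤ b := by
          rw [card_sdiff_of_subset hts, ht]
          have : #s ≤ a + b := hx
          omega

end Hamming

theorem l0_eq_hammingNorm {N : ℕ} (η : Fin N → ℝ) : l0 η = hammingNorm η := by
  unfold l0 hammingNorm; congr

theorem spark_uniqueness_iff_general {m N k : ℕ} (A : Matrix (Fin m) (Fin N) ℝ) :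
    ((∀ η : Fin N → ℝ, A.mulVec η = 0 → η ≠ 0 → 2 * k < l0 η) →
      ∀ c₁ c₂ : Fin N → ℝ, l0 c₁ ≤ k → l0 c₂ ≤ k →
        A.mulVec c₁ = A.mulVec c₂ → c₁ = c₂) ∧
    ((∃ η : Fin N → ℝ, A.mulVec η = 0 ∧ η ≠ 0 ∧ l0 η ≤ 2 * k) →
      ∃ c₁ c₂ : Fin N → ℝ, l0 c₁ ≤ k ∧ l0 c₂ ≤ k ∧ c₁ ≠ c₂ ∧
        A.mulVec c₁ = A.mulVec c₂) := by
  simp only [l0_eq_hammingNorm]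
  constructor
  · intro hspark c₁ c₂ h₁ h₂ hA
    by_contra hne
    have hsparse := hspark (c₁ - c₂) (by rw [Matrix.mulVec_sub, hA, sub_self]) (sub_ne_zero.mpr hne)
    have htriangle := hammingNorm_sub_le c₁ c₂
    omega
  · rintro ⟨η, hker, hne, hle⟩
    obtain ⟨c₁, c₂, h₁, h₂, rfl⟩ := exists_sub_eq_of_hammingNorm_le_add (hle.trans (two_mul k).le)
    exact ⟨c₁, c₂, h₁, h₂, sub_ne_zero.mp hne, sub_eq_zero.mp (by rwa [← Matrix.mulVec_sub])⟩

theorem spark_uniqueness_iff {m N k : ℕ} (hmN : m < N) (A : Matrix (Fin m) (Fin N) ℝ) :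
    ((∀ η : Fin N → ℝ, A.mulVec η = 0 → η ≠ 0 → 2 * k < l0 η) →
      ∀ c₁ c₂ : Fin N → ℝ, l0 c₁ ≤ k → l0 c₂ ≤ k →
        A.mulVec c₁ = A.mulVec c₂ → c₁ = c₂) ∧
    ((∃ η : Fin N → ℝ, A.mulVec η = 0 ∧ η ≠ 0 ∧ l0 η ≤ 2 * k) →
      ∃ c₁ c₂ : Fin N → ℝ, l0 c₁ ≤ k ∧ l0 c₂ ≤ k ∧ c₁ ≠ c₂ ∧
        A.mulVec c₁ = A.mulVec c₂) :=
  spark_uniqueness_iff_general A
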